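/- arXiv:2202.09864 — 8 statements merged into one kernel-verified Lean document; each statement's English description precedes it below -/
import Mathlib

section
/- For every natural number n ≥ 3 with n ∉ {4, 6, 10}, there exist at least two distinct primes p, q with n/2 < p ≤ n and n/2 < q ≤ n. -/
/-!
For `m = n / 2 ≥ 512` we run Erdős's proof of Bertrand's postulate on `centralBinom m`.
A prime in `(m, 2m]` divides it exactly once, so if there were at most one such prime it
would contribute a factor of at most `2m`. That factor is recovered by counting only the
primes `2 ≤ p ≤ √(2m)`, rather than all `p ≤ √(2m)`, in the usual bound; hence
`centralBinom m ≤ (2m)^√(2m) · 4^(2m/3)`, and `bertrand_main_inequality` contradicts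
`4^m < m · centralBinom m`. For `n < 1234` a chain of twelve prime pairs `p < q` with
`q ≤ 2p` covers every admissible `n`.
-/

open Finset Nat

namespace Nat

theorem pow_factorization_centralBinom_le_self {n p : ℕ} (hp : sqrt (2 * n) < p) :
    p ^ (centralBinom n).factorization p ≤ p :=
  (pow_le_pow_right₀ (by omega) (factorization_choose_le_one (sqrt_lt'.mp hp))).trans_eq
    (pow_one p)

theorem primeFactors_centralBinom_subset {n : ℕ} (hn : 2 < n) :
    (centralBinom n).primeFactors ⊆
      {p ∈ range (2 * n / 3 + 1) | p.Prime} ∪ {p ∈ Ioc n (2 * n) | p.Prime} := by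
  intro p hp
  have hprime := prime_of_mem_primeFactors hp
  have hpos : 0 < (centralBinom n).factorization p :=
    hprime.factorization_pos_of_dvd (centralBinom_ne_zero n) (dvd_of_mem_primeFactors hp)
  have h2n : p ≤ 2 * n := le_two_mul_of_factorization_centralBinom_pos hpos
  have hgap : ¬ (p ≤ n ∧ 2 * n < 3 * p) := fun h =>
    hpos.ne' (factorization_centralBinom_of_two_mul_self_lt_three_mul hn h.1 h.2)
  simp only [mem_union, mem_filter, mem_range, mem_Ioc, hprime, and_true]
  omega

theorem prod_pow_factorization_centralBinom_filter_le_sqrt_le {n : ℕ} (hn : 0 < n) :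
    ∏ p ∈ (centralBinom n).primeFactors with p ≤ sqrt (2 * n),
        p ^ (centralBinom n).factorization p ≤ (2 * n) ^ (sqrt (2 * n) - 1) := by
  calc _ ≤ (2 * n) ^ #{p ∈ (centralBinom n).primeFactors | p ≤ sqrt (2 * n)} :=
        prod_le_pow_card _ _ _ fun p _ => pow_factorization_choose_le (by omega)
    _ ≤ (2 * n) ^ #(Icc 2 (sqrt (2 * n))) := by
        gcongr
        · omega
        · intro p hp
          simp only [mem_filter] at hp
          exact mem_Icc.2 ⟨(prime_of_mem_primeFactors hp.1).two_le, hp.2⟩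
    _ = (2 * n) ^ (sqrt (2 * n) - 1) := by simp

theorem prod_pow_factorization_centralBinom_filter_sqrt_lt_le {n : ℕ} (hn : 2 < n) :
    ∏ p ∈ (centralBinom n).primeFactors with ¬ p ≤ sqrt (2 * n),
        p ^ (centralBinom n).factorization p ≤
      4 ^ (2 * n / 3) * ∏ p ∈ Ioc n (2 * n) with p.Prime, p := by
  have hdisj : Disjoint {p ∈ range (2 * n / 3 + 1) | p.Prime} {p ∈ Ioc n (2 * n) | p.Prime} :=
    disjoint_filter_filter (disjoint_left.2 fun p hp hp' => by
      simp only [mem_range, mem_Ioc] at hp hp'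
      omega)
  calc _ ≤ ∏ p ∈ (centralBinom n).primeFactors with ¬ p ≤ sqrt (2 * n), p :=
        prod_le_prod' fun p hp =>
          pow_factorization_centralBinom_le_self (not_le.1 (mem_filter.1 hp).2)
    _ ≤ ∏ p ∈ {p ∈ range (2 * n / 3 + 1) | p.Prime} ∪ {p ∈ Ioc n (2 * n) | p.Prime},
          p :=
        prod_le_prod_of_subset_of_one_le'
          ((filter_subset _ _).trans (primeFactors_centralBinom_subset hn))
          fun p hp _ => by
            rcases mem_union.1 hp with h | h <;> exact (Nat.Prime.one_lt (mem_filter.1 h).2).le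
    _ = primorial (2 * n / 3) * ∏ p ∈ Ioc n (2 * n) with p.Prime, p := prod_union hdisj
    _ ≤ _ := by gcongr; exact primorial_le_four_pow _

theorem centralBinom_le_mul_prod_primes_Ioc {n : ℕ} (hn : 2 < n) :
    centralBinom n ≤
      (2 * n) ^ (sqrt (2 * n) - 1) * 4 ^ (2 * n / 3) * ∏ p ∈ Ioc n (2 * n) with p.Prime, p :=
  calc centralBinom n
      = ∏ p ∈ (centralBinom n).primeFactors, p ^ (centralBinom n).factorization p :=
        prod_primeFactors_pow_factorization (centralBinom_ne_zero n)
    _ = (∏ p ∈ (centralBinom n).primeFactors with p ≤ sqrt (2 * n),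
          p ^ (centralBinom n).factorization p) *
        ∏ p ∈ (centralBinom n).primeFactors with ¬ p ≤ sqrt (2 * n),
          p ^ (centralBinom n).factorization p :=
        (prod_filter_mul_prod_filter_not _ _ _).symm
    _ ≤ _ := by
        rw [mul_assoc]
        exact mul_le_mul' (prod_pow_factorization_centralBinom_filter_le_sqrt_le (by omega))
          (prod_pow_factorization_centralBinom_filter_sqrt_lt_le hn)

theorem one_lt_card_primes_Ioc_two_mul {n : ℕ} (hn : 512 ≤ n) :
    1 < #{p ∈ Ioc n (2 * n) | p.Prime} := by
  by_contra! h
  have hprod : ∏ p ∈ Ioc n (2 * n) with p.Prime, p ≤ 2 * n :=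
    calc _ ≤ (2 * n) ^ #{p ∈ Ioc n (2 * n) | p.Prime} :=
          prod_le_pow_card _ _ _ fun p hp => (mem_Ioc.1 (mem_filter.1 hp).1).2
      _ ≤ 2 * n := (pow_le_pow_right₀ (by omega) h).trans_eq (pow_one _)
  have hsqrt : sqrt (2 * n) ≠ 0 := (sqrt_pos.2 (by omega)).ne'
  have hcentral : n * centralBinom n ≤ n * (2 * n) ^ sqrt (2 * n) * 4 ^ (2 * n / 3) :=
    calc n * centralBinom n
        ≤ n * ((2 * n) ^ (sqrt (2 * n) - 1) * 4 ^ (2 * n / 3) * (2 * n)) := by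
          gcongr
          exact (centralBinom_le_mul_prod_primes_Ioc (by omega)).trans (by gcongr)
      _ = n * (2 * n) ^ sqrt (2 * n) * 4 ^ (2 * n / 3) := by
          rw [← pow_sub_one_mul hsqrt]
          ring
  exact (four_pow_lt_mul_centralBinom n (by omega)).not_ge
    (hcentral.trans (bertrand_main_inequality hn))

theorem one_lt_card_primes_Ioc_half_of_lt_two_mul {n : ℕ} (p q : ℕ) (hp : p.Prime)
    (hq : q.Prime) (hpq : p < q) (hn : n < 2 * p)
    (H : n < q → 1 < #{r ∈ Ioc (n / 2) n | r.Prime}) :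
    1 < #{r ∈ Ioc (n / 2) n | r.Prime} := by
  by_cases hqn : n < q
  · exact H hqn
  · exact one_lt_card.2 ⟨p, by simp only [mem_filter, mem_Ioc, hp, and_true]; omega,
      q, by simp only [mem_filter, mem_Ioc, hq, and_true]; omega, hpq.ne⟩

theorem one_lt_card_primes_Ioc_half_of_lt {n : ℕ} (hn : 3 ≤ n) (h4 : n ≠ 4) (h6 : n ≠ 6)
    (h10 : n ≠ 10) (hlt : n < 1234) : 1 < #{p ∈ Ioc (n / 2) n | p.Prime} := by
  refine one_lt_card_primes_Ioc_half_of_lt_two_mul 617 619 ?_ ?_ ?_ ?_ fun _ =>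
    one_lt_card_primes_Ioc_half_of_lt_two_mul 311 313 ?_ ?_ ?_ ?_ fun _ =>
    one_lt_card_primes_Ioc_half_of_lt_two_mul 157 163 ?_ ?_ ?_ ?_ fun _ =>
    one_lt_card_primes_Ioc_half_of_lt_two_mul 83 89 ?_ ?_ ?_ ?_ fun _ =>
    one_lt_card_primes_Ioc_half_of_lt_two_mul 47 53 ?_ ?_ ?_ ?_ fun _ =>
    one_lt_card_primes_Ioc_half_of_lt_two_mul 29 31 ?_ ?_ ?_ ?_ fun _ =>
    one_lt_card_primes_Ioc_half_of_lt_two_mul 17 19 ?_ ?_ ?_ ?_ fun _ =>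
    one_lt_card_primes_Ioc_half_of_lt_two_mul 11 13 ?_ ?_ ?_ ?_ fun _ =>
    one_lt_card_primes_Ioc_half_of_lt_two_mul 7 11 ?_ ?_ ?_ ?_ fun _ =>
    one_lt_card_primes_Ioc_half_of_lt_two_mul 5 7 ?_ ?_ ?_ ?_ fun _ =>
    one_lt_card_primes_Ioc_half_of_lt_two_mul 3 5 ?_ ?_ ?_ ?_ fun _ =>
    one_lt_card_primes_Ioc_half_of_lt_two_mul 2 3 ?_ ?_ ?_ ?_ fun _ => ?_
  all_goals first | omega | norm_num

end Nat

theorem stmt0 (n : ℕ) (hn : 3 ≤ n) (h4 : n ≠ 4) (h6 : n ≠ 6) (h10 : n ≠ 10) :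
    ∃ p q : ℕ, Nat.Prime p ∧ Nat.Prime q ∧ p ≠ q ∧
      n < 2 * p ∧ p ≤ n ∧ n < 2 * q ∧ q ≤ n := by
  have htwo : 1 < #{p ∈ Ioc (n / 2) n | p.Prime} := by
    rcases lt_or_ge n 1024 with hsmall | hlarge
    · exact one_lt_card_primes_Ioc_half_of_lt hn h4 h6 h10 (by omega)
    · exact (one_lt_card_primes_Ioc_two_mul (by omega)).trans_le
        (card_le_card (filter_subset_filter _ (Ioc_subset_Ioc_right (by omega))))
  obtain ⟨p, hp, q, hq, hpq⟩ := one_lt_card.1 htwo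
  simp only [mem_filter, mem_Ioc] at hp hq
  exact ⟨p, q, hp.2, hq.2, hpq, by omega, hp.1.2, by omega, hq.1.2⟩
end

section
/- Assume that for every real x ≥ 3275 there is a prime in the interval (x, 132x/131]. Then for every natural number n ≥ 6550 there exist at least two distinct primes in the interval (n/2, n]. -/
theorem stmt3
    (H : ∀ x : ℝ, 3275 ≤ x → ∃ p : ℕ, Nat.Prime p ∧ x < p ∧ (p : ℝ) ≤ 132 * x / 131) :
    ∀ n : ℕ, 6550 ≤ n → ∃ p q : ℕ, Nat.Prime p ∧ Nat.Prime q ∧ p ≠ q ∧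
      n < 2 * p ∧ p ≤ n ∧ n < 2 * q ∧ q ≤ n := by
  intro n hn
  have hn' : (6550 : ℝ) ≤ (n : ℝ) := by exact_mod_cast hn
  obtain ⟨p, hp, hp1, hp2⟩ := H ((n : ℝ) / 2) (by linarith)
  obtain ⟨q, hq, hq1, hq2⟩ := H ((n : ℝ) / 2 * (132 / 131)) (by nlinarith)
  have hpq : (p : ℝ) < q := by
    have : (p : ℝ) ≤ (n : ℝ) / 2 * (132 / 131) := by linarith
    linarith
  refine ⟨p, q, hp, hq, ?_, ?_, ?_, ?_, ?_⟩
  · exact fun h => absurd (h ▸ hpq) (lt_irrefl _)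
  · have : (n : ℝ) < 2 * p := by linarith
    exact_mod_cast this
  · have : (p : ℝ) ≤ n := by nlinarith
    exact_mod_cast this
  · have : (n : ℝ) < 2 * q := by nlinarith
    exact_mod_cast this
  · have : (q : ℝ) ≤ n := by nlinarith
    exact_mod_cast this
end

section
/- Assume that for every real x ≥ 3275 there is a prime in the interval (x, 132x/131]. Then for every natural number n ≥ 13100 there exist at least three distinct primes in the interval (n/4, n/3]. -/
theorem stmt4
    (H : ∀ x : ℝ, 3275 ≤ x → ∃ p : ℕ, Nat.Prime p ∧ x < p ∧ (p : ℝ) ≤ 132 * x / 131) :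
    ∀ n : ℕ, 13100 ≤ n → ∃ p q r : ℕ, Nat.Prime p ∧ Nat.Prime q ∧ Nat.Prime r ∧
      p ≠ q ∧ p ≠ r ∧ q ≠ r ∧
      n < 4 * p ∧ 3 * p ≤ n ∧ n < 4 * q ∧ 3 * q ≤ n ∧ n < 4 * r ∧ 3 * r ≤ n := by
  intro n hn
  have hn' : (13100 : ℝ) ≤ n := by exact_mod_cast hn
  have h1 : (3275 : ℝ) ≤ (n : ℝ) / 4 := by linarith
  obtain ⟨p, hp, hp1, hp2⟩ := H ((n : ℝ) / 4) h1
  have hp3 : (3275 : ℝ) ≤ p := by linarith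
  obtain ⟨q, hq, hq1, hq2⟩ := H p hp3
  have hq3 : (3275 : ℝ) ≤ q := by linarith
  obtain ⟨r, hr, hr1, hr2⟩ := H q hq3
  have key : (r : ℝ) ≤ (n : ℝ) / 3 := by nlinarith
  have hrq : (q : ℝ) < r := hr1
  have hqp : (p : ℝ) < q := hq1
  refine ⟨p, q, r, hp, hq, hr, ?_, ?_, ?_, ?_, ?_, ?_, ?_, ?_, ?_⟩
  · exact fun h => by simp [h] at hqp
  · exact fun h => by rw [h] at hqp; linarith
  · exact fun h => by rw [h] at hrq; linarith
  · have : (n : ℝ) < 4 * p := by linarith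
    exact_mod_cast this
  · have : (3 : ℝ) * p ≤ n := by nlinarith
    exact_mod_cast this
  · have : (n : ℝ) < 4 * q := by linarith
    exact_mod_cast this
  · have : (3 : ℝ) * q ≤ n := by nlinarith
    exact_mod_cast this
  · have : (n : ℝ) < 4 * r := by linarith
    exact_mod_cast this
  · have : (3 : ℝ) * r ≤ n := by linarith
    exact_mod_cast this
end

section
/- Let n be a natural number and p a prime with 5 ≤ p, n/4 < p, and 3p ≤ n. Then for every m with 2 ≤ m ≤ n and m ≠ 2p, we have (m divides 2p or 2p divides m) if and only if m ∈ {2, p}. -/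
theorem stmt7 (n p : ℕ) (hp : Nat.Prime p) (hp5 : 5 ≤ p)
    (h1 : n < 4 * p) (h2 : 3 * p ≤ n) :
    ∀ m : ℕ, 2 ≤ m → m ≤ n → m ≠ 2 * p →
      ((m ∣ 2 * p ∨ 2 * p ∣ m) ↔ (m = 2 ∨ m = p)) := by
  intro m hm2 hmn hmne
  constructor
  · rintro (hd | hd)
    · by_cases hpm : p ∣ m
      · right
        rcases hpm with ⟨t, rfl⟩
        have ht : t ∣ 2 := by
          have := (mul_dvd_mul_iff_left (show p ≠ 0 by omega)).mp
            (by rwa [mul_comm 2 p] at hd : p * t ∣ p * 2)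
          exact this
        have := Nat.le_of_dvd (by norm_num) ht
        interval_cases t
        · omega
        · simp
        · omega
      · left
        have hcop : Nat.Coprime m p :=
          ((Nat.Prime.coprime_iff_not_dvd hp).mpr hpm).symm
        have hm2' : m ∣ 2 := hcop.dvd_of_dvd_mul_right hd
        have := Nat.le_of_dvd (by norm_num) hm2'
        omega
    · exfalso
      rcases hd with ⟨k, hk⟩
      rcases Nat.lt_or_ge k 2 with hk2 | hk2
      · interval_cases k <;> omega
      · have : 2 * p * 2 ≤ 2 * p * k := Nat.mul_le_mul_left _ hk2
        omega
  · rintro (rfl | rfl)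
    · exact Or.inl ⟨p, rfl⟩
    · exact Or.inl (dvd_mul_left _ _)
end

section
/- Consider the following game on a finite simple graph G: the first player chooses any vertex, then players alternately move to a vertex adjacent to the last chosen vertex that has not been chosen before; a player unable to move loses. If G admits a perfect matching, then the second player has a winning strategy. -/
/-- `moveWins G k l` : in the path-building game on `G` where the (reversed) list of
already-chosen vertices is `l` (head = last chosen vertex), the player whose turn it is
to move can force a win within `k` further moves. -/
def moveWins {V : Type*} (G : SimpleGraph V) : ℕ → List V → Prop
  | 0, _ => False
  | k + 1, l => ∃ v w, l.head? = some v ∧ G.Adj v w ∧ w ∉ l ∧ ¬ moveWins G k (w :: l)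

/-- If `G` admits a perfect matching, the second player wins the path-building game:
whatever starting vertex `v` the first player chooses, the player to move (the second
player) has a winning strategy. -/
theorem stmt11 {V : Type*} [Fintype V] (G : SimpleGraph V)
    (M : G.Subgraph) (hM : M.IsPerfectMatching) :
    ∀ v : V, moveWins G (Fintype.card V) [v] := by
  obtain ⟨hm, hs⟩ := hM
  choose f hf1 hf2 using fun v => hm (hs v)
  have hff : ∀ v, f (f v) = v := fun v => (hf2 (f v) v (hf1 v).symm).symm
  have hfne : ∀ v, f v ≠ v := fun v h => G.irrefl (h ▸ M.adj_sub (hf1 v))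
  have key : ∀ k : ℕ, ∀ t : List V, ∀ v : V,
      (v :: t).Nodup → (∀ x ∈ t, f x ∈ t) →
      Fintype.card V + 1 ≤ t.length + 1 + k → moveWins G k (v :: t) := by
    intro k
    induction k using Nat.strong_induction_on with
    | _ k ih =>
      intro t v hnd hcl hlen
      have hle : (v :: t).length ≤ Fintype.card V := hnd.length_le_card
      simp at hle
      obtain ⟨k', rfl⟩ : ∃ k', k = k' + 1 := ⟨k - 1, by omega⟩
      have hfvt : f v ∉ t := by
        intro h
        have := hcl _ h
        rw [hff] at this
        exact (List.nodup_cons.mp hnd).1 this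
      refine ⟨v, f v, rfl, M.adj_sub (hf1 v), ?_, ?_⟩
      · simp only [List.mem_cons, not_or]
        exact ⟨hfne v, hfvt⟩
      · match k' with
        | 0 => simp [moveWins]
        | k'' + 1 =>
          rintro ⟨u, w, hu, hadj, hw, hnw⟩
          simp only [List.head?_cons, Option.some.injEq] at hu
          apply hnw
          apply ih k'' (by omega) (f v :: v :: t) w
          · refine List.nodup_cons.mpr ⟨hw, List.nodup_cons.mpr ⟨?_, hnd⟩⟩
            simp only [List.mem_cons, not_or]
            exact ⟨hfne v, hfvt⟩
          · intro x hx
            simp only [List.mem_cons] at hx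
            rcases hx with h | h | h
            · subst h; rw [hff]; simp
            · subst h; simp
            · simp only [List.mem_cons]
              exact Or.inr (Or.inr (hcl x h))
          · simp only [List.length_cons] at hlen ⊢
            omega
  intro v
  match h : Fintype.card V with
  | 0 => exact absurd (Fintype.card_pos_iff.mpr ⟨v⟩) (by omega)
  | n + 1 =>
    apply key
    · simp
    · simp
    · simp; omega
end

section
/- Consider the path-building game on a finite simple graph G in which the first player chooses a starting vertex and players alternately extend a simple path; a player unable to move loses. If there is a vertex v of G such that the induced subgraph on V(G) \ {v} admits a perfect matching, then the first player has a winning strategy (starting at v). -/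
/-!
After the first player starts at `v`, they answer every move to a vertex `w` with the partner of
`w` in the matching. The visited vertices are then always `v` together with whole matching edges,
so the opponent's new vertex has an unvisited partner and the first player can always move.
Since a path has at most `|V|` vertices, the opponent is the one who eventually gets stuck.
-/

namespace SimpleGraph.Subgraph

variable {V : Type*} {G : SimpleGraph V} {M : G.Subgraph} {l : List V}

/-- Positions (reversed lists of visited vertices) where the player to move loses against the
replies along `M`. -/
structure IsMatchedPosition (M : G.Subgraph) (l : List V) : Prop where
  nodup : l.Nodup
  mem_verts_of_not_mem : ∀ u ∉ l, u ∈ M.verts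
  mem_of_adj : ∀ ⦃u w⦄, M.Adj u w → u ∈ l → w ∈ l

theorem IsMatchedPosition.exists_reply (hM : M.IsMatching) (hl : M.IsMatchedPosition l) {w : V}
    (hw : w ∉ l) : ∃ w', M.Adj w w' ∧ w' ∉ w :: l ∧ M.IsMatchedPosition (w' :: w :: l) := by
  obtain ⟨w', hww', huniq⟩ := hM (hl.mem_verts_of_not_mem w hw)
  have hw'l : w' ∉ l := fun h => hw (hl.mem_of_adj hww'.symm h)
  have hw'w : w' ∉ w :: l := by simp [hww'.ne.symm, hw'l]
  refine ⟨w', hww', hw'w, ⟨List.Nodup.cons hw'w (hl.nodup.cons hw), ?_, ?_⟩⟩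
  · intro u hu
    exact hl.mem_verts_of_not_mem u fun h => hu (by simp [h])
  · intro u x hux hu
    rcases List.mem_cons.1 hu with rfl | hu
    · simp [hM.eq_of_adj_left hux hww'.symm]
    rcases List.mem_cons.1 hu with rfl | hu
    · simp [huniq x hux]
    · simp [hl.mem_of_adj hux hu]

theorem IsMatchedPosition.not_moveWins [Fintype V] (hM : M.IsMatching) (k : ℕ)
    (hl : M.IsMatchedPosition l) (hk : Fintype.card V < k + l.length) : ¬ moveWins G k l := by
  induction k using Nat.strong_induction_on generalizing l with
  | _ k IH =>
    intro hwin
    obtain _ | k := k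
    · exact hwin
    obtain ⟨-, w, -, -, hwl, hlose⟩ := hwin
    obtain ⟨w', hww', hw', hl'⟩ := hl.exists_reply hM hwl
    have hlen : (w :: l).length ≤ Fintype.card V := (hl.nodup.cons hwl).length_le_card
    obtain ⟨k, rfl⟩ : ∃ k', k = k' + 1 := ⟨k - 1, by simp only [List.length_cons] at hlen; omega⟩
    exact hlose ⟨w, w', rfl, M.adj_sub hww', hw',
      IH k (by omega) hl' (by simp only [List.length_cons]; omega)⟩

end SimpleGraph.Subgraph

/-- If the subgraph of `G` induced on the complement of some vertex `v` has a perfect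
matching, then the first player wins the path-building game by starting at `v`
(i.e. the second player, to move after `[v]`, cannot force a win). -/
theorem stmt12 {V : Type*} [Fintype V] (G : SimpleGraph V) (v : V)
    (M : (G.induce {u : V | u ≠ v}).Subgraph) (hM : M.IsPerfectMatching) :
    ¬ moveWins G (Fintype.card V) [v] := by
  let ι := SimpleGraph.Embedding.induce (G := G) {u : V | u ≠ v}
  have hMι : (M.map ι.toHom).IsMatching := hM.1.map ι.toHom ι.injective
  refine SimpleGraph.Subgraph.IsMatchedPosition.not_moveWins hMι _
    ⟨List.nodup_singleton v, ?_, ?_⟩ (by simp)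
  · intro u hu
    exact ⟨⟨u, by simpa using hu⟩, hM.2 _, rfl⟩
  · rintro _ w ⟨⟨u, hu⟩, _, -, rfl, -⟩ hv
    exact absurd (List.mem_singleton.1 hv) hu
end

section
/- Consider the path-building game on a finite simple graph G in which the first player chooses a starting vertex and players alternately extend a simple path, with a player unable to move losing. If G contains two distinct vertices u and w, each of degree 1, having the same (common) neighbor v, then the first player has a winning strategy: start at u; the opponent must move to v (or cannot move), and then move to w. -/
/-- If `G` has two distinct degree-1 vertices `u` and `w` with the same neighbor `v`,
then the first player wins the path-building game by starting at `u`. -/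
theorem stmt13 {V : Type*} [Fintype V] (G : SimpleGraph V) (u w v : V)
    (huw : u ≠ w)
    (hu : G.Adj u v) (hu1 : ∀ x, G.Adj u x → x = v)
    (hw : G.Adj w v) (hw1 : ∀ x, G.Adj w x → x = v) :
    ¬ moveWins G (Fintype.card V) [u] := by
  have hvu : v ≠ u := fun h => G.irrefl (h ▸ hu)
  have hvw : v ≠ w := fun h => G.irrefl (h ▸ hw)
  classical
  have hcard : 3 ≤ Fintype.card V := by
    have h3 : ({u, w, v} : Finset V).card = 3 := by
      rw [Finset.card_insert_of_notMem (by simp [huw, hvu.symm]),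
        Finset.card_insert_of_notMem (by simp [hvw.symm]), Finset.card_singleton]
    calc 3 = ({u, w, v} : Finset V).card := h3.symm
    _ ≤ _ := Finset.card_le_univ _
  obtain ⟨m, hm⟩ : ∃ m, Fintype.card V = m + 2 := ⟨Fintype.card V - 2, by omega⟩
  rw [hm]
  intro h
  obtain ⟨a, b, ha, hab, hb, hnb⟩ := h
  simp only [List.head?, Option.some.injEq] at ha
  subst ha
  have hbv := hu1 _ hab
  rw [hbv] at hnb
  apply hnb
  refine ⟨v, w, rfl, hw.symm, by simp [hvw.symm, huw.symm], ?_⟩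
  cases m with
  | zero => simp [moveWins]
  | succ m =>
    intro h2
    obtain ⟨a, b, ha, hab2, hb2, _⟩ := h2
    simp only [List.head?, Option.some.injEq] at ha
    subst ha
    have := hw1 _ hab2
    subst this
    simp at hb2
end

section
/- Let n ≥ 4. If there exist three distinct primes p, q, r with n/4 < p, q, r and 3p ≤ n, 3q ≤ n, 3r ≤ n, and p, q, r ≥ 5, then the nine numbers 2, 3, p, 2p, 3p, q, 2q, 3q, r (together with 2r, 3r) are pairwise distinct elements of {2,…,n}, and each of p, 2p, 3p (and similarly for q, r) is adjacent in the divisor graph on {2,…,n} only to vertices in {2, 3, p} (respectively {2,3,q}, {2,3,r}). -/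
lemma cross_ne (p q a b : ℕ) (hp : Nat.Prime p) (hq : Nat.Prime q) (hpq : p ≠ q)
    (hq5 : 5 ≤ q) (ha1 : 1 ≤ a) (ha3 : a ≤ 3) (hb1 : 1 ≤ b) : a * p ≠ b * q := by
  intro h
  have hqd : q ∣ a * p := ⟨b, by rw [h]; ring⟩
  rcases (Nat.Prime.dvd_mul hq).mp hqd with h1 | h2
  · have := Nat.le_of_dvd (by omega) h1; omega
  · exact hpq ((Nat.prime_dvd_prime_iff_eq hq hp).mp h2).symm

lemma adj_aux (n p : ℕ) (hp : Nat.Prime p) (hp4 : n < 4 * p) (hp5 : 5 ≤ p) :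
    ∀ m : ℕ, 2 ≤ m → m ≤ n → ∀ x ∈ ({p, 2 * p, 3 * p} : Set ℕ), m ≠ x →
      (m ∣ x ∨ x ∣ m) → m ∈ ({2, 3, p, 2 * p, 3 * p} : Set ℕ) := by
  intro m hm2 hmn x hx hne hdvd
  simp only [Set.mem_insert_iff, Set.mem_singleton_iff] at hx ⊢
  have hp0 : 0 < p := by omega
  have hdiv : ∀ c : ℕ, c = 2 ∨ c = 3 → m ∣ c * p → m ≠ c * p → m = 2 ∨ m = 3 ∨ m = p := by
    intro c hc hmd hmne
    by_cases hpm : p ∣ m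
    · obtain ⟨t, rfl⟩ := hpm
      have ht : t ∣ c := by
        have h' : p * t ∣ p * c := by rwa [mul_comm c p] at hmd
        exact (mul_dvd_mul_iff_left (by omega : p ≠ 0)).mp h'
      rcases hc with rfl | rfl
      · have := Nat.le_of_dvd (by norm_num) ht
        interval_cases t <;> omega
      · have := Nat.le_of_dvd (by norm_num) ht
        interval_cases t <;> [skip; skip; (exact absurd ht (by norm_num)); skip] <;> omega
    · have hcop : Nat.Coprime m p := (hp.coprime_iff_not_dvd.mpr hpm).symm
      have hmc : m ∣ c := hcop.dvd_of_dvd_mul_right hmd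
      have := Nat.le_of_dvd (by omega) hmc
      omega
  rcases hx with hx1 | hx1 | hx1 <;> rw [hx1] at hne hdvd
  · rcases hdvd with h | h
    · rcases (Nat.Prime.eq_one_or_self_of_dvd hp m h) with h1 | h1 <;> omega
    · obtain ⟨t, rfl⟩ := h
      have h1 : p * t < p * 4 := by omega
      have ht4 : t < 4 := Nat.lt_of_mul_lt_mul_left h1
      interval_cases t <;> omega
  · rcases hdvd with h | h
    · have := hdiv 2 (Or.inl rfl) h hne; tauto
    · obtain ⟨t, rfl⟩ := h
      have ht2 : t < 2 := by
        by_contra hc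
        push_neg at hc
        have h2 : 2 * p * 2 ≤ 2 * p * t := Nat.mul_le_mul_left _ hc
        omega
      interval_cases t <;> omega
  · rcases hdvd with h | h
    · have := hdiv 3 (Or.inr rfl) h hne; tauto
    · obtain ⟨t, rfl⟩ := h
      have ht2 : t < 2 := by
        by_contra hc
        push_neg at hc
        have h2 : 3 * p * 2 ≤ 3 * p * t := Nat.mul_le_mul_left _ hc
        omega
      interval_cases t <;> omega

theorem stmt18 (n p q r : ℕ) (hn : 4 ≤ n)
    (hp : Nat.Prime p) (hq : Nat.Prime q) (hr : Nat.Prime r)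
    (hpq : p ≠ q) (hpr : p ≠ r) (hqr : q ≠ r)
    (hp4 : n < 4 * p) (hp3 : 3 * p ≤ n)
    (hq4 : n < 4 * q) (hq3 : 3 * q ≤ n)
    (hr4 : n < 4 * r) (hr3 : 3 * r ≤ n)
    (hp5 : 5 ≤ p) (hq5 : 5 ≤ q) (hr5 : 5 ≤ r) :
    ([2, 3, p, 2 * p, 3 * p, q, 2 * q, 3 * q, r, 2 * r, 3 * r] : List ℕ).Pairwise (· ≠ ·) ∧
    (∀ x ∈ ([2, 3, p, 2 * p, 3 * p, q, 2 * q, 3 * q, r, 2 * r, 3 * r] : List ℕ),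
      2 ≤ x ∧ x ≤ n) ∧
    (∀ m : ℕ, 2 ≤ m → m ≤ n → ∀ x ∈ ({p, 2 * p, 3 * p} : Set ℕ), m ≠ x →
      (m ∣ x ∨ x ∣ m) → m ∈ ({2, 3, p, 2 * p, 3 * p} : Set ℕ)) ∧
    (∀ m : ℕ, 2 ≤ m → m ≤ n → ∀ x ∈ ({q, 2 * q, 3 * q} : Set ℕ), m ≠ x →
      (m ∣ x ∨ x ∣ m) → m ∈ ({2, 3, q, 2 * q, 3 * q} : Set ℕ)) ∧
    (∀ m : ℕ, 2 ≤ m → m ≤ n → ∀ x ∈ ({r, 2 * r, 3 * r} : Set ℕ), m ≠ x →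
      (m ∣ x ∨ x ∣ m) → m ∈ ({2, 3, r, 2 * r, 3 * r} : Set ℕ)) := by
  have cpq1 := cross_ne p q 1 1 hp hq hpq hq5 le_rfl (by norm_num) le_rfl
  have cpq2 := cross_ne p q 1 2 hp hq hpq hq5 le_rfl (by norm_num) (by norm_num)
  have cpq3 := cross_ne p q 1 3 hp hq hpq hq5 le_rfl (by norm_num) (by norm_num)
  have cpq4 := cross_ne p q 2 1 hp hq hpq hq5 (by norm_num) (by norm_num) le_rfl
  have cpq5 := cross_ne p q 2 2 hp hq hpq hq5 (by norm_num) (by norm_num) (by norm_num)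
  have cpq6 := cross_ne p q 2 3 hp hq hpq hq5 (by norm_num) (by norm_num) (by norm_num)
  have cpq7 := cross_ne p q 3 1 hp hq hpq hq5 (by norm_num) (by norm_num) le_rfl
  have cpq8 := cross_ne p q 3 2 hp hq hpq hq5 (by norm_num) (by norm_num) (by norm_num)
  have cpq9 := cross_ne p q 3 3 hp hq hpq hq5 (by norm_num) (by norm_num) (by norm_num)
  have cpr1 := cross_ne p r 1 1 hp hr hpr hr5 le_rfl (by norm_num) le_rfl
  have cpr2 := cross_ne p r 1 2 hp hr hpr hr5 le_rfl (by norm_num) (by norm_num)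
  have cpr3 := cross_ne p r 1 3 hp hr hpr hr5 le_rfl (by norm_num) (by norm_num)
  have cpr4 := cross_ne p r 2 1 hp hr hpr hr5 (by norm_num) (by norm_num) le_rfl
  have cpr5 := cross_ne p r 2 2 hp hr hpr hr5 (by norm_num) (by norm_num) (by norm_num)
  have cpr6 := cross_ne p r 2 3 hp hr hpr hr5 (by norm_num) (by norm_num) (by norm_num)
  have cpr7 := cross_ne p r 3 1 hp hr hpr hr5 (by norm_num) (by norm_num) le_rfl
  have cpr8 := cross_ne p r 3 2 hp hr hpr hr5 (by norm_num) (by norm_num) (by norm_num)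
  have cpr9 := cross_ne p r 3 3 hp hr hpr hr5 (by norm_num) (by norm_num) (by norm_num)
  have cqr1 := cross_ne q r 1 1 hq hr hqr hr5 le_rfl (by norm_num) le_rfl
  have cqr2 := cross_ne q r 1 2 hq hr hqr hr5 le_rfl (by norm_num) (by norm_num)
  have cqr3 := cross_ne q r 1 3 hq hr hqr hr5 le_rfl (by norm_num) (by norm_num)
  have cqr4 := cross_ne q r 2 1 hq hr hqr hr5 (by norm_num) (by norm_num) le_rfl
  have cqr5 := cross_ne q r 2 2 hq hr hqr hr5 (by norm_num) (by norm_num) (by norm_num)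
  have cqr6 := cross_ne q r 2 3 hq hr hqr hr5 (by norm_num) (by norm_num) (by norm_num)
  have cqr7 := cross_ne q r 3 1 hq hr hqr hr5 (by norm_num) (by norm_num) le_rfl
  have cqr8 := cross_ne q r 3 2 hq hr hqr hr5 (by norm_num) (by norm_num) (by norm_num)
  have cqr9 := cross_ne q r 3 3 hq hr hqr hr5 (by norm_num) (by norm_num) (by norm_num)
  refine ⟨?_, ?_, adj_aux n p hp hp4 hp5, adj_aux n q hq hq4 hq5, adj_aux n r hr hr4 hr5⟩
  · show ([2, 3, p, 2 * p, 3 * p, q, 2 * q, 3 * q, r, 2 * r, 3 * r] : List ℕ).Nodup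
    simp only [List.nodup_cons, List.mem_cons, List.not_mem_nil, or_false, not_or,
      List.nodup_nil, not_false_eq_true, and_true, List.mem_singleton]
    omega
  · intro x hx
    simp only [List.mem_cons, List.not_mem_nil, or_false] at hx
    rcases hx with rfl|rfl|rfl|rfl|rfl|rfl|rfl|rfl|rfl|rfl|rfl <;> omega
end
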